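/- arXiv:0902.3096 — 3 statements merged into one kernel-verified Lean document; each statement's English description precedes it below -/
import Mathlib

section
/- Let q : ℝ^n → ℂ be an integrable function supported in the closed unit ball, and let ξ, ξ' ∈ ℝ^n satisfy |ξ - ξ'| ≤ 3. Then |q̂(ξ)| ≤ C · M(q̂)(ξ'), where q̂ is the Fourier transform of q, M is the Hardy–Littlewood maximal operator, and C depends only on n. -/
/-! Cut `q` off by a Schwartz function `χ` equal to `1` on the unit ball: `q = q χ`, hence
`q̂ = q̂ ⋆ χ̂` and `|q̂(ξ)| ≤ ∫ |q̂(η)| |χ̂(ξ - η)| dη`. As `|χ̂(u)| ≲ (1 + |u|)^{-(n+1)}`, the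
kernel is dominated by `∑ₘ 2^{-m(n+1)} 1_{|u| < 2^{m+1}}`. The ball `B(ξ, 2^{m+1})` lies in
`B(ξ', 4 · 2^{m+1})`, so the `m`-th term contributes `≲ 2^{-m} M(q̂)(ξ')`, a geometric series. -/

open MeasureTheory Metric
open scoped ENNReal

/-- Hardy–Littlewood maximal operator, valued in `ℝ≥0∞`. -/
noncomputable def HLmax {n : ℕ} (f : EuclideanSpace ℝ (Fin n) → ℝ)
    (x : EuclideanSpace ℝ (Fin n)) : ℝ≥0∞ :=
  ⨆ r : {r : ℝ // 0 < r},
    (volume (ball x r.1))⁻¹ * ∫⁻ y in ball x r.1, ENNReal.ofReal |f y|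

open scoped FourierTransform RealInnerProductSpace SchwartzMap

theorem SchwartzMap.exists_one_add_pow_mul_norm_le {E F : Type*} [NormedAddCommGroup E]
    [NormedSpace ℝ E] [NormedAddCommGroup F] [NormedSpace ℝ F] (f : 𝓢(E, F)) (k : ℕ) :
    ∃ D, 0 < D ∧ ∀ x, (1 + ‖x‖) ^ k * ‖f x‖ ≤ D := by
  refine ⟨2 ^ k * (Finset.Iic (k, 0)).sup (fun m => SchwartzMap.seminorm ℝ m.1 m.2) f + 1,
    by positivity, fun x => ?_⟩
  have := one_add_le_sup_seminorm_apply (𝕜 := ℝ) (m := (k, 0)) le_rfl le_rfl f x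
  rw [norm_iteratedFDeriv_zero] at this
  linarith

theorem exists_schwartzMap_eq_one_on_closedBall {E : Type*} [NormedAddCommGroup E]
    [NormedSpace ℝ E] [FiniteDimensional ℝ E] [HasContDiffBump E] (x : E) (R : ℝ) :
    ∃ χ : 𝓢(E, ℂ), ∀ y ∈ closedBall x R, χ y = 1 := by
  let c : ContDiffBump x := ⟨max R 1, max R 1 + 1, by positivity, lt_add_one _⟩
  have hχ : HasCompactSupport (fun y => (c y : ℂ)) :=
    c.hasCompactSupport.comp_left Complex.ofReal_zero
  refine ⟨hχ.toSchwartzMap (Complex.ofRealCLM.contDiff.comp c.contDiff), fun y hy => ?_⟩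
  change (c y : ℂ) = 1
  rw [c.one_of_mem_closedBall (closedBall_subset_closedBall (le_max_left R 1) hy),
    Complex.ofReal_one]

section Convolution

variable {V : Type*} [NormedAddCommGroup V] [InnerProductSpace ℝ V] [FiniteDimensional ℝ V]
  [MeasurableSpace V] [BorelSpace V]

theorem Real.fourier_fourier_comp_sub_left (χ : 𝓢(V, ℂ)) (ξ : V) :
    𝓕 (fun η => 𝓕 ⇑χ (ξ - η)) = fun x => 𝐞 (-⟪x, ξ⟫) • χ x := by
  -- translation by `ξ` gives the phase; the reflection turns `𝓕 (𝓕 χ)` into `𝓕⁻ (𝓕 χ) = χ`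
  ext x
  have h := congrFun (VectorFourier.fourierIntegral_comp_add_right 𝐞 volume (innerₗ V)
    (fun η => 𝓕 ⇑χ (-η)) (-ξ)) x
  simp only [Function.comp_def, neg_add, neg_neg] at h
  rw [show (fun η => 𝓕 ⇑χ (ξ - η)) = fun η => 𝓕 ⇑χ (-η + ξ) by ext; abel_nf]
  change VectorFourier.fourierIntegral _ _ _ _ _ = _
  rw [h, innerₗ_apply_apply, inner_neg_left, real_inner_comm]
  congr 1
  change 𝓕 (fun η => 𝓕 ⇑χ (-η)) x = _
  rw [← Real.fourierInv_eq_fourier_comp_neg, ← SchwartzMap.fourier_coe,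
    ← SchwartzMap.fourierInv_coe, FourierTransform.fourierInv_fourier_eq]

theorem Real.fourier_mul_schwartzMap_eq_integral {q : V → ℂ} (hq : Integrable q) (χ : 𝓢(V, ℂ))
    (ξ : V) : 𝓕 (fun x => q x * χ x) ξ = ∫ η, 𝓕 q η * 𝓕 ⇑χ (ξ - η) := by
  have hg : Integrable (fun η => 𝓕 ⇑χ (ξ - η)) := (𝓕 χ).integrable.comp_sub_left ξ
  have := VectorFourier.integral_fourierIntegral_smul_eq_flip (L := innerₗ V)
    Real.continuous_fourierChar continuous_inner hq hg
  rw [flip_innerₗ] at this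
  change ∫ η, 𝓕 q η * _ = ∫ x, q x * 𝓕 (fun η => 𝓕 ⇑χ (ξ - η)) x at this
  rw [this, Real.fourier_fourier_comp_sub_left, Real.fourier_eq]
  congr 1 with x
  simp only [Circle.smul_def, smul_eq_mul]
  ring

end Convolution

theorem ofReal_le_tsum_indicator_ball {X : Type*} [PseudoMetricSpace X] {k : ℕ} {a D : ℝ}
    {x y : X} (ha : 0 ≤ a) (h : (1 + dist x y) ^ k * a ≤ D) :
    ENNReal.ofReal a ≤
      ∑' m : ℕ, (ball x (2 ^ (m + 1))).indicator (fun _ => ENNReal.ofReal (D / (2 ^ m) ^ k)) y := by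
  obtain ⟨m, hm_le, hm_lt⟩ :=
    exists_nat_pow_near (le_add_of_nonneg_right dist_nonneg : (1 : ℝ) ≤ 1 + dist x y) one_lt_two
  have hy : y ∈ ball x (2 ^ (m + 1)) := by
    rw [mem_ball, dist_comm]; linarith
  calc ENNReal.ofReal a ≤ ENNReal.ofReal (D / (2 ^ m) ^ k) := by
        refine ENNReal.ofReal_le_ofReal ((le_div_iff₀' (by positivity)).2 ?_)
        exact (mul_le_mul_of_nonneg_right (pow_le_pow_left₀ (by positivity) hm_le k) ha).trans h
    _ = (ball x (2 ^ (m + 1))).indicator (fun _ => ENNReal.ofReal (D / (2 ^ m) ^ k)) y :=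
        (Set.indicator_of_mem hy (fun _ => _)).symm
    _ ≤ _ := ENNReal.le_tsum m

theorem setLIntegral_ball_le_volume_mul_HLmax {n : ℕ} (f : EuclideanSpace ℝ (Fin n) → ℝ)
    (x : EuclideanSpace ℝ (Fin n)) {R : ℝ} (hR : 0 < R) :
    ∫⁻ y in ball x R, ENNReal.ofReal |f y| ≤ volume (ball x R) * HLmax f x := by
  calc ∫⁻ y in ball x R, ENNReal.ofReal |f y|
      = volume (ball x R) * ((volume (ball x R))⁻¹ * ∫⁻ y in ball x R, ENNReal.ofReal |f y|) := by
        rw [← mul_assoc, ENNReal.mul_inv_cancel (measure_ball_pos volume x hR).ne'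
          measure_ball_lt_top.ne, one_mul]
    _ ≤ volume (ball x R) * HLmax f x :=
        mul_le_mul_right (le_iSup (fun r : {r : ℝ // 0 < r} => (volume (ball x r.1))⁻¹ *
          ∫⁻ y in ball x r.1, ENNReal.ofReal |f y|) ⟨R, hR⟩) _

theorem lintegral_mul_le_tsum_setLIntegral_ball {E F : Type*} [NormedAddCommGroup E]
    [MeasurableSpace E] [OpensMeasurableSpace E] [NormedAddCommGroup F] (μ : Measure E)
    {g : E → ℝ≥0∞} (hg : Measurable g) {K : E → F} {k : ℕ} {D : ℝ}
    (hK : ∀ u, (1 + ‖u‖) ^ k * ‖K u‖ ≤ D) (ξ : E) :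
    ∫⁻ η, g η * ‖K (ξ - η)‖ₑ ∂μ ≤
      ∑' m : ℕ, ENNReal.ofReal (D / (2 ^ m) ^ k) * ∫⁻ η in ball ξ (2 ^ (m + 1)), g η ∂μ := by
  have hdom : ∀ η, g η * ‖K (ξ - η)‖ₑ ≤ ∑' m : ℕ,
      (ball ξ (2 ^ (m + 1))).indicator (fun η => ENNReal.ofReal (D / (2 ^ m) ^ k) * g η) η := by
    intro η
    have hKη := ofReal_le_tsum_indicator_ball (x := ξ) (y := η) (norm_nonneg _)
      (by simpa only [dist_eq_norm] using hK (ξ - η))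
    rw [← ofReal_norm]
    refine (mul_le_mul_right hKη _).trans_eq ?_
    rw [← ENNReal.tsum_mul_left]
    congr 1 with m
    by_cases hη : η ∈ ball ξ (2 ^ (m + 1)) <;> simp [hη, mul_comm]
  calc ∫⁻ η, g η * ‖K (ξ - η)‖ₑ ∂μ
      ≤ ∫⁻ η, ∑' m : ℕ, (ball ξ (2 ^ (m + 1))).indicator
          (fun η => ENNReal.ofReal (D / (2 ^ m) ^ k) * g η) η ∂μ := lintegral_mono hdom
    _ = _ := by
        rw [lintegral_tsum fun m => ((hg.const_mul _).indicator measurableSet_ball).aemeasurable]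
        congr 1 with m
        rw [lintegral_indicator measurableSet_ball, lintegral_const_mul _ hg]

theorem lintegral_mul_kernel_le_HLmax {n : ℕ} {F : Type*} [NormedAddCommGroup F]
    {f : EuclideanSpace ℝ (Fin n) → ℝ} (hf : Measurable f) {K : EuclideanSpace ℝ (Fin n) → F}
    {D r : ℝ} (hK : ∀ u, (1 + ‖u‖) ^ (n + 1) * ‖K u‖ ≤ D) {ξ ξ' : EuclideanSpace ℝ (Fin n)}
    (hξ : dist ξ ξ' ≤ r) :
    ∫⁻ η, ENNReal.ofReal |f η| * ‖K (ξ - η)‖ₑ ≤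
      ENNReal.ofReal (2 ^ (n + 1) * D * (1 + r) ^ n) *
        volume (ball (0 : EuclideanSpace ℝ (Fin n)) 1) * HLmax f ξ' := by
  have hD : 0 ≤ D := (mul_nonneg (by positivity) (norm_nonneg _)).trans (hK 0)
  have hr : 0 ≤ r := dist_nonneg.trans hξ
  have hball (m : ℕ) : ball ξ (2 ^ (m + 1)) ⊆ ball ξ' ((1 + r) * 2 ^ (m + 1)) :=
    ball_subset_ball' (by nlinarith [one_le_pow₀ (M₀ := ℝ) one_le_two (n := m + 1)])
  have hterm (m : ℕ) : ENNReal.ofReal (D / (2 ^ m) ^ (n + 1)) *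
      volume (ball ξ' ((1 + r) * 2 ^ (m + 1))) =
        ENNReal.ofReal (2 ^ n * D * (1 + r) ^ n) * 2⁻¹ ^ m *
          volume (ball (0 : EuclideanSpace ℝ (Fin n)) 1) := by
    have key : D / (2 ^ m) ^ (n + 1) * ((1 + r) * 2 ^ (m + 1)) ^ n =
        2 ^ n * D * (1 + r) ^ n * ((2 : ℝ) ^ m)⁻¹ := by
      rw [pow_succ (2 : ℝ) m, mul_pow, mul_pow, pow_succ]
      field_simp
    rw [Measure.addHaar_ball_of_pos _ _ (by positivity), finrank_euclideanSpace_fin, ← mul_assoc,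
      ← ENNReal.ofReal_mul' (by positivity), key, ENNReal.ofReal_mul (by positivity),
      ENNReal.ofReal_inv_of_pos (by positivity), ENNReal.ofReal_pow zero_le_two,
      ENNReal.ofReal_ofNat, ENNReal.inv_pow]
  calc ∫⁻ η, ENNReal.ofReal |f η| * ‖K (ξ - η)‖ₑ
      ≤ ∑' m : ℕ, ENNReal.ofReal (D / (2 ^ m) ^ (n + 1)) *
          ∫⁻ η in ball ξ (2 ^ (m + 1)), ENNReal.ofReal |f η| :=
        lintegral_mul_le_tsum_setLIntegral_ball volume hf.abs.ennreal_ofReal hK ξ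
    _ ≤ ∑' m : ℕ, ENNReal.ofReal (D / (2 ^ m) ^ (n + 1)) *
          (volume (ball ξ' ((1 + r) * 2 ^ (m + 1))) * HLmax f ξ') := by
        gcongr with m
        exact (lintegral_mono_set (hball m)).trans
          (setLIntegral_ball_le_volume_mul_HLmax f ξ' (by positivity))
    _ = (∑' m : ℕ, (2 : ℝ≥0∞)⁻¹ ^ m) * ENNReal.ofReal (2 ^ n * D * (1 + r) ^ n) *
          volume (ball (0 : EuclideanSpace ℝ (Fin n)) 1) * HLmax f ξ' := by
        simp only [← mul_assoc, hterm, ← ENNReal.tsum_mul_right, mul_comm ((2 : ℝ≥0∞)⁻¹ ^ _)]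
    _ = _ := by
        rw [ENNReal.tsum_geometric, ENNReal.one_sub_inv_two, inv_inv,
          show (2 : ℝ) ^ (n + 1) * D * (1 + r) ^ n = 2 * (2 ^ n * D * (1 + r) ^ n) by ring,
          ENNReal.ofReal_mul zero_le_two, ENNReal.ofReal_ofNat]

/-- If `q` is integrable and supported in the closed unit ball, and
`|ξ - ξ'| ≤ 3`, then `|q̂(ξ)| ≤ C · M(q̂)(ξ')`, with `C = C(n)`. -/
theorem fourier_bound_by_maximal (n : ℕ) :
    ∃ C : ℝ, 0 < C ∧
      ∀ (q : EuclideanSpace ℝ (Fin n) → ℂ),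
        Integrable q volume →
        (Function.support q ⊆ closedBall 0 1) →
        ∀ ξ ξ' : EuclideanSpace ℝ (Fin n), ‖ξ - ξ'‖ ≤ 3 →
          ENNReal.ofReal ‖FourierTransform.fourier q ξ‖ ≤
            ENNReal.ofReal C * HLmax (fun y => ‖FourierTransform.fourier q y‖) ξ' := by
  obtain ⟨χ, hχ⟩ := exists_schwartzMap_eq_one_on_closedBall (0 : EuclideanSpace ℝ (Fin n)) 1
  obtain ⟨D, hD, hK⟩ := (𝓕 χ).exists_one_add_pow_mul_norm_le (n + 1)
  have hv : 0 < (volume (ball (0 : EuclideanSpace ℝ (Fin n)) 1)).toReal :=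
    ENNReal.toReal_pos (measure_ball_pos volume _ one_pos).ne' measure_ball_lt_top.ne
  refine ⟨2 ^ (n + 1) * D * (1 + 3) ^ n * (volume (ball (0 : EuclideanSpace ℝ (Fin n)) 1)).toReal,
    by positivity, fun q hq hsupp ξ ξ' hξ => ?_⟩
  have hqχ : (fun x => q x * χ x) = q := funext fun x => by
    by_cases hx : q x = 0
    · simp [hx]
    · rw [hχ x (hsupp hx), mul_one]
  have hcont : Continuous (𝓕 q) :=
    VectorFourier.fourierIntegral_continuous (L := innerₗ _) Real.continuous_fourierChar
      continuous_inner hq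
  rw [ENNReal.ofReal_mul (by positivity), ENNReal.ofReal_toReal measure_ball_lt_top.ne]
  calc ENNReal.ofReal ‖𝓕 q ξ‖ = ‖∫ η, 𝓕 q η * 𝓕 ⇑χ (ξ - η)‖ₑ := by
        rw [ofReal_norm, ← Real.fourier_mul_schwartzMap_eq_integral hq χ, hqχ]
    _ ≤ ∫⁻ η, ENNReal.ofReal |‖𝓕 q η‖| * ‖𝓕 ⇑χ (ξ - η)‖ₑ := by
        simpa only [enorm_mul, abs_norm, ofReal_norm] using
          enorm_integral_le_lintegral_enorm fun η => 𝓕 q η * 𝓕 ⇑χ (ξ - η)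
    _ ≤ _ := lintegral_mul_kernel_le_HLmax hcont.norm.measurable hK (by rwa [dist_eq_norm])
end

section
/- Let ψ, ζ ∈ [0, π] with |cos ψ| ≤ 10^{-5} and |cos(ψ - ζ)| < 1 - 10^{-9}. Then |cos ζ| > 3·10^{-5}, and consequently for all δ, γ ∈ (-π, π], |sin ζ · cos ψ · cos(δ - γ) - sin ψ · cos ζ| ≥ |sin ψ||cos ζ| - |sin ζ||cos ψ| ≥ 3·10^{-5}·√(1 - 10^{-10}) - 10^{-5}·√(1 - 9·10^{-10}) > 10^{-5}. -/
set_option maxHeartbeats 1000000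


open Real

/-- Quantitative trigonometric lower bound (domain `𝒜₁`): if `ψ, ζ ∈ [0,π]`,
`|cos ψ| ≤ 10⁻⁵` and `|cos(ψ-ζ)| < 1 - 10⁻⁹`, then `|cos ζ| > 3·10⁻⁵`, and for
all `δ, γ ∈ (-π, π]`,
`|sin ζ cos ψ cos(δ-γ) - sin ψ cos ζ| ≥ |sin ψ||cos ζ| - |sin ζ||cos ψ|`
`≥ 3·10⁻⁵ √(1-10⁻¹⁰) - 10⁻⁵ √(1-9·10⁻¹⁰) > 10⁻⁵`. -/
theorem trig_lower_bound_A1 (ψ ζ : ℝ)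
    (hψ : ψ ∈ Set.Icc 0 π) (hζ : ζ ∈ Set.Icc 0 π)
    (hcosψ : |cos ψ| ≤ (10 : ℝ) ^ (-5 : ℤ))
    (hcosd : |cos (ψ - ζ)| < 1 - (10 : ℝ) ^ (-9 : ℤ)) :
    |cos ζ| > 3 * (10 : ℝ) ^ (-5 : ℤ) ∧
    ∀ δ γ : ℝ, δ ∈ Set.Ioc (-π) π → γ ∈ Set.Ioc (-π) π →
      |sin ζ * cos ψ * cos (δ - γ) - sin ψ * cos ζ| ≥
          |sin ψ| * |cos ζ| - |sin ζ| * |cos ψ| ∧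
      |sin ψ| * |cos ζ| - |sin ζ| * |cos ψ| ≥
          3 * (10 : ℝ) ^ (-5 : ℤ) * Real.sqrt (1 - (10 : ℝ) ^ (-10 : ℤ)) -
            (10 : ℝ) ^ (-5 : ℤ) * Real.sqrt (1 - 9 * (10 : ℝ) ^ (-10 : ℤ)) ∧
      3 * (10 : ℝ) ^ (-5 : ℤ) * Real.sqrt (1 - (10 : ℝ) ^ (-10 : ℤ)) -
          (10 : ℝ) ^ (-5 : ℤ) * Real.sqrt (1 - 9 * (10 : ℝ) ^ (-10 : ℤ)) >
        (10 : ℝ) ^ (-5 : ℤ) := by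
  have he5 : (10 : ℝ) ^ (-5 : ℤ) = 1/100000 := by norm_num
  have he9 : (10 : ℝ) ^ (-9 : ℤ) = 1/1000000000 := by norm_num
  have he10 : (10 : ℝ) ^ (-10 : ℤ) = 1/10000000000 := by norm_num
  rw [he5] at hcosψ
  rw [he9] at hcosd
  rw [he5, he10]
  have hsψ : 0 ≤ sin ψ := sin_nonneg_of_nonneg_of_le_pi hψ.1 hψ.2
  have hsζ : 0 ≤ sin ζ := sin_nonneg_of_nonneg_of_le_pi hζ.1 hζ.2
  have hpψ : sin ψ ^ 2 + cos ψ ^ 2 = 1 := sin_sq_add_cos_sq ψ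
  have hpζ : sin ζ ^ 2 + cos ζ ^ 2 = 1 := sin_sq_add_cos_sq ζ
  have habsψ := abs_le.mp hcosψ
  have hsψ2 : sin ψ ^ 2 ≥ 1 - 1/10000000000 := by
    nlinarith [sq_abs (cos ψ), abs_nonneg (cos ψ)]
  -- |cos ζ| > 3e-5
  have h1 : |cos ζ| > 3 * (1/100000 : ℝ) := by
    by_contra h
    push_neg at h
    have habsζ := abs_le.mp h
    have hsζ2 : sin ζ ^ 2 ≥ 1 - 9/10000000000 := by
      nlinarith [sq_abs (cos ζ), abs_nonneg (cos ζ)]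
    have hprod : sin ψ * sin ζ ≥ 1 - 7/10000000000 := by
      have hmm : (1 - 1/10000000000 : ℝ) * (1 - 9/10000000000) ≤ sin ψ ^ 2 * sin ζ ^ 2 :=
        mul_le_mul hsψ2 hsζ2 (by norm_num) (sq_nonneg _)
      have hps : (sin ψ * sin ζ) ^ 2 = sin ψ ^ 2 * sin ζ ^ 2 := mul_pow _ _ _
      nlinarith [mul_nonneg hsψ hsζ]
    have hcos : cos (ψ - ζ) = cos ψ * cos ζ + sin ψ * sin ζ := cos_sub ψ ζ
    have h2 : cos (ψ - ζ) ≤ |cos (ψ - ζ)| := le_abs_self _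
    have h3 : cos ψ * cos ζ ≥ -(3/10000000000) := by
      have := mul_le_mul hcosψ h (abs_nonneg (cos ζ)) (by norm_num : (0:ℝ) ≤ 1/100000)
      nlinarith [neg_abs_le (cos ψ * cos ζ), abs_mul (cos ψ) (cos ζ)]
    linarith
  refine ⟨h1, fun δ γ _ _ => ?_⟩
  have ha : Real.sqrt (1 - 1/10000000000) ≤ sin ψ := by
    rw [show sin ψ = Real.sqrt (sin ψ ^ 2) from (Real.sqrt_sq hsψ).symm]
    exact Real.sqrt_le_sqrt (by linarith)
  have hb : sin ζ ≤ Real.sqrt (1 - 9/10000000000) := by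
    rw [show sin ζ = Real.sqrt (sin ζ ^ 2) from (Real.sqrt_sq hsζ).symm]
    apply Real.sqrt_le_sqrt
    nlinarith [sq_abs (cos ζ), abs_nonneg (cos ζ)]
  have ha0 : (0:ℝ) ≤ Real.sqrt (1 - 1/10000000000) := Real.sqrt_nonneg _
  have hb0 : (0:ℝ) ≤ Real.sqrt (1 - 9/10000000000) := Real.sqrt_nonneg _
  have hbsq : Real.sqrt (1 - 9/10000000000) ^ 2 = 1 - 9/10000000000 :=
    Real.sq_sqrt (by norm_num)
  have hasq : Real.sqrt (1 - 1/10000000000) ^ 2 = 1 - 1/10000000000 :=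
    Real.sq_sqrt (by norm_num)
  have hb1 : Real.sqrt (1 - 9/10000000000) ≤ 1 := by nlinarith
  have ha1 : Real.sqrt (1 - 1/10000000000) ≥ 1 - 1/10000000000 := by nlinarith
  refine ⟨?_, ?_, by linarith⟩
  · have h4 : |sin ζ * cos ψ * cos (δ - γ)| ≤ |sin ζ| * |cos ψ| := by
      rw [abs_mul, abs_mul]
      have := abs_cos_le_one (δ - γ)
      nlinarith [abs_nonneg (sin ζ), abs_nonneg (cos ψ),
        mul_nonneg (abs_nonneg (sin ζ)) (abs_nonneg (cos ψ))]
    calc |sin ζ * cos ψ * cos (δ - γ) - sin ψ * cos ζ|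
        ≥ |sin ψ * cos ζ| - |sin ζ * cos ψ * cos (δ - γ)| := by
          rw [abs_sub_comm]; exact abs_sub_abs_le_abs_sub _ _
      _ ≥ |sin ψ| * |cos ζ| - |sin ζ| * |cos ψ| := by rw [abs_mul]; linarith
  · have hsa : |sin ψ| = sin ψ := abs_of_nonneg hsψ
    have hsb : |sin ζ| = sin ζ := abs_of_nonneg hsζ
    rw [hsa, hsb]
    have t1 : 3 * (1/100000 : ℝ) * Real.sqrt (1 - 1/10000000000) ≤ |cos ζ| * sin ψ :=
      mul_le_mul h1.le ha ha0 (abs_nonneg _)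
    have t2 : sin ζ * |cos ψ| ≤ Real.sqrt (1 - 9/10000000000) * (1/100000) :=
      mul_le_mul hb hcosψ (abs_nonneg _) hb0
    have := mul_comm (|cos ζ|) (sin ψ)
    nlinarith
end

section
/- Let 0 < C₁ < 10^{-5}/2 and let ψ, ζ ∈ [0, π], δ, γ ∈ (-π, π] satisfy: |cos ψ| ≤ 2C₁, |cos(ψ - ζ)| ≥ 1 - 10^{-9}, and -(1 - 1/5000) ≤ cos(ψ-ζ)cos(δ-γ) + cos ψ cos ζ (1 - cos(δ-γ)) ≤ 1 - 1/80000. Then |cos(δ - γ)| ≤ (1 - 1/80000 + 2C₁)/(1 - 10^{-9} - 2C₁), and hence |sin(δ - γ)| is bounded below by a strictly positive constant depending only on C₁. -/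
open Real

/-- Abstract arithmetic core: bound `|x|` by the crude ratio. -/
lemma aux_ratio_bound (t a e x : ℝ) (ht : 0 < t) (ht' : t ≤ (10:ℝ)^(-5:ℤ))
    (he : |e| ≤ t) (ha : 1 - (10:ℝ)^(-9:ℤ) ≤ |a|)
    (hE1 : -(1 - 1/5000) ≤ a*x + e*(1-x))
    (hE2 : a*x + e*(1-x) ≤ 1 - 1/80000) :
    |x| ≤ (1 - 1/80000 + t) / (1 - (10:ℝ)^(-9:ℤ) - t) := by
  have h9 : (10:ℝ)^(-9:ℤ) = 1/1000000000 := by norm_num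
  have h5 : (10:ℝ)^(-5:ℤ) = 1/100000 := by norm_num
  rw [h9] at ha ⊢
  rw [h5] at ht'
  have hden : (0:ℝ) < 1 - 1/1000000000 - t := by linarith
  have hae : 1 - 1/1000000000 - t ≤ |a - e| := by
    have := abs_sub_abs_le_abs_sub a e
    have := abs_abs (a - e)
    have h := abs_le.mp (le_refl |a - e|)
    calc 1 - 1/1000000000 - t ≤ |a| - |e| := by linarith
    _ ≤ |a - e| := abs_sub_abs_le_abs_sub a e
  have hEe : |a*x + e*(1-x) - e| ≤ 1 - 1/80000 + t := by
    rw [abs_le]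
    constructor
    · have := neg_abs_le e
      linarith [abs_le.mp (le_refl |e|)]
    · linarith [neg_abs_le e, le_abs_self e]
  have hkey : |a - e| * |x| ≤ 1 - 1/80000 + t := by
    rw [← abs_mul]
    have : (a - e) * x = a*x + e*(1-x) - e := by ring
    rw [this]
    exact hEe
  rw [le_div_iff₀ hden]
  calc |x| * (1 - 1/1000000000 - t) ≤ |x| * |a - e| := by
        apply mul_le_mul_of_nonneg_left hae (abs_nonneg x)
  _ = |a - e| * |x| := mul_comm _ _
  _ ≤ 1 - 1/80000 + t := hkey

set_option maxHeartbeats 1000000 in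
/-- Refined arithmetic core: under the geometric constraints `|x|` is bounded
away from `1`. -/
lemma aux_refined_bound (t a x cψ cζ sψ sζ : ℝ) (ht : 0 < t)
    (ht' : t ≤ (10:ℝ)^(-5:ℤ))
    (hcψ : |cψ| ≤ t) (ha : 1 - (10:ℝ)^(-9:ℤ) ≤ |a|)
    (hadef : a = cψ * cζ + sψ * sζ)
    (hsψ0 : 0 ≤ sψ) (hsψ1 : sψ ≤ 1) (hsζ0 : 0 ≤ sζ) (hsζ1 : sζ ≤ 1)
    (hpyζ : cζ^2 + sζ^2 = 1)
    (hx1 : |x| ≤ 1)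
    (hE1 : -(1 - 1/5000) ≤ a*x + cψ*cζ*(1-x))
    (hE2 : a*x + cψ*cζ*(1-x) ≤ 1 - 1/80000) :
    |x| ≤ 1 - 1/100000 := by
  have h9 : (10:ℝ)^(-9:ℤ) = 1/1000000000 := by norm_num
  have h5 : (10:ℝ)^(-5:ℤ) = 1/100000 := by norm_num
  rw [h9] at ha; rw [h5] at ht'
  have hcζ1 : |cζ| ≤ 1 := by nlinarith [sq_abs cζ, sq_nonneg sζ, abs_nonneg cζ]
  have he : |cψ * cζ| ≤ t := by
    rw [abs_mul]
    calc |cψ| * |cζ| ≤ t * 1 := by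
          apply mul_le_mul hcψ hcζ1 (abs_nonneg cζ) (le_of_lt ht)
    _ = t := mul_one t
  -- a must be positive: a ≥ cψ cζ ≥ -t > -(1 - 10⁻⁹)
  have hage : a ≥ -t := by nlinarith [neg_abs_le (cψ * cζ), mul_nonneg hsψ0 hsζ0]
  have hapos : 1 - 1/1000000000 ≤ a := by
    rcases abs_cases a with ⟨h, _⟩ | ⟨h, _⟩
    · linarith
    · linarith
  -- hence sin ζ is close to 1
  have hss : 1 - 1/1000000000 - t ≤ sψ * sζ := by
    have := le_abs_self (cψ * cζ)
    linarith
  have hsζ : 1 - 1/1000000000 - t ≤ sζ := by nlinarith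
  have hcζsq : cζ^2 ≤ 3/100000 := by nlinarith
  have hcζ : |cζ| ≤ 1/100 := by
    have : |cζ|^2 ≤ (1/100)^2 := by rw [sq_abs]; nlinarith
    nlinarith [abs_nonneg cζ]
  have he' : |cψ * cζ| ≤ 1/10000000 := by
    rw [abs_mul]
    calc |cψ| * |cζ| ≤ (1/100000) * (1/100) := by
          apply mul_le_mul (le_trans hcψ ht') hcζ (abs_nonneg cζ) (by norm_num)
    _ = 1/10000000 := by norm_num
  -- now bound x on both sides
  have hae : a - cψ*cζ ≥ 1 - 1/1000000000 - 1/10000000 := by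
    have := le_abs_self (cψ * cζ)
    linarith
  have hxup : x ≤ 1 - 1/100000 := by
    by_contra h
    push_neg at h
    have hx0 : 0 < x := by linarith
    have h1 : (a - cψ*cζ) * x = a*x + cψ*cζ*(1-x) - cψ*cζ := by ring
    have h2 : (a - cψ*cζ) * x ≤ 1 - 1/80000 + 1/10000000 := by
      rw [h1]; linarith [neg_abs_le (cψ*cζ)]
    have h3 : (1 - 1/1000000000 - 1/10000000) * (1 - 1/100000)
        < (1 - 1/1000000000 - 1/10000000) * x :=
      mul_lt_mul_of_pos_left h (by norm_num)
    have h4 : (1 - 1/1000000000 - 1/10000000) * x ≤ (a - cψ*cζ) * x :=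
      mul_le_mul_of_nonneg_right hae (le_of_lt hx0)
    linarith
  have hxlow : -(1 - 1/100000) ≤ x := by
    by_contra h
    push_neg at h
    have h1 : (a - cψ*cζ) * x = a*x + cψ*cζ*(1-x) - cψ*cζ := by ring
    have h2 : -(1 - 1/5000 + 1/10000000) ≤ (a - cψ*cζ) * x := by
      rw [h1]; linarith [le_abs_self (cψ*cζ)]
    have hx0 : x ≤ 0 := by linarith
    have h3 : (a - cψ*cζ) * x ≤ (1 - 1/1000000000 - 1/10000000) * x :=
      mul_le_mul_of_nonpos_right hae hx0
    have h4 : (1 - 1/1000000000 - 1/10000000) * x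
        < (1 - 1/1000000000 - 1/10000000) * (-(1 - 1/100000)) :=
      mul_lt_mul_of_pos_left h (by norm_num)
    linarith
  exact abs_le.mpr ⟨hxlow, hxup⟩

/-- Quantitative trigonometric bound (domain `𝒜₂`): fix `0 < C₁ < 10⁻⁵/2`.
If `ψ, ζ ∈ [0,π]`, `δ, γ ∈ (-π,π]` satisfy `|cos ψ| ≤ 2C₁`,
`|cos(ψ-ζ)| ≥ 1 - 10⁻⁹`, and
`-(1 - 1/5000) ≤ cos(ψ-ζ)cos(δ-γ) + cos ψ cos ζ (1 - cos(δ-γ)) ≤ 1 - 1/80000`,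
then `|cos(δ-γ)| ≤ (1 - 1/80000 + 2C₁)/(1 - 10⁻⁹ - 2C₁)`, and `|sin(δ-γ)|` is
bounded below by a strictly positive constant depending only on `C₁`. -/
theorem trig_lower_bound_A2 (C₁ : ℝ) (hC₁ : 0 < C₁)
    (hC₁' : C₁ < (10 : ℝ) ^ (-5 : ℤ) / 2) :
    (∀ ψ ζ δ γ : ℝ,
        ψ ∈ Set.Icc 0 π → ζ ∈ Set.Icc 0 π →
        δ ∈ Set.Ioc (-π) π → γ ∈ Set.Ioc (-π) π →
        |cos ψ| ≤ 2 * C₁ →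
        1 - (10 : ℝ) ^ (-9 : ℤ) ≤ |cos (ψ - ζ)| →
        -(1 - 1 / 5000) ≤
            cos (ψ - ζ) * cos (δ - γ) + cos ψ * cos ζ * (1 - cos (δ - γ)) →
        cos (ψ - ζ) * cos (δ - γ) + cos ψ * cos ζ * (1 - cos (δ - γ)) ≤
            1 - 1 / 80000 →
        |cos (δ - γ)| ≤
          (1 - 1 / 80000 + 2 * C₁) / (1 - (10 : ℝ) ^ (-9 : ℤ) - 2 * C₁)) ∧
    ∃ c : ℝ, 0 < c ∧
      ∀ ψ ζ δ γ : ℝ,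
        ψ ∈ Set.Icc 0 π → ζ ∈ Set.Icc 0 π →
        δ ∈ Set.Ioc (-π) π → γ ∈ Set.Ioc (-π) π →
        |cos ψ| ≤ 2 * C₁ →
        1 - (10 : ℝ) ^ (-9 : ℤ) ≤ |cos (ψ - ζ)| →
        -(1 - 1 / 5000) ≤
            cos (ψ - ζ) * cos (δ - γ) + cos ψ * cos ζ * (1 - cos (δ - γ)) →
        cos (ψ - ζ) * cos (δ - γ) + cos ψ * cos ζ * (1 - cos (δ - γ)) ≤
            1 - 1 / 80000 →
        c ≤ |sin (δ - γ)| := by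
  have ht : 0 < 2 * C₁ := by linarith
  have h5 : (10:ℝ)^(-5:ℤ) = 1/100000 := by norm_num
  have ht' : 2 * C₁ ≤ (10:ℝ)^(-5:ℤ) := by rw [h5]; rw [h5] at hC₁'; linarith
  constructor
  · intro ψ ζ δ γ _ _ _ _ hcψ ha hE1 hE2
    have he : |cos ψ * cos ζ| ≤ 2 * C₁ := by
      rw [abs_mul]
      calc |cos ψ| * |cos ζ| ≤ (2*C₁) * 1 := by
            apply mul_le_mul hcψ (abs_cos_le_one ζ) (abs_nonneg _) (le_of_lt ht)
      _ = 2*C₁ := mul_one _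
    exact aux_ratio_bound (2*C₁) (cos (ψ-ζ)) (cos ψ * cos ζ) (cos (δ-γ))
      ht ht' he ha hE1 hE2
  · refine ⟨1/400, by norm_num, ?_⟩
    intro ψ ζ δ γ hψ hζ _ _ hcψ ha hE1 hE2
    have hadef : cos (ψ - ζ) = cos ψ * cos ζ + sin ψ * sin ζ := Real.cos_sub ψ ζ
    have hsψ0 : 0 ≤ sin ψ := Real.sin_nonneg_of_mem_Icc hψ
    have hsζ0 : 0 ≤ sin ζ := Real.sin_nonneg_of_mem_Icc hζ
    have hkey : |cos (δ - γ)| ≤ 1 - 1/100000 :=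
      aux_refined_bound (2*C₁) (cos (ψ-ζ)) (cos (δ-γ)) (cos ψ) (cos ζ)
        (sin ψ) (sin ζ) ht ht' hcψ ha hadef hsψ0 (Real.sin_le_one ψ)
        hsζ0 (Real.sin_le_one ζ) (Real.cos_sq_add_sin_sq ζ)
        (Real.abs_cos_le_one _) hE1 hE2
    have hpy : sin (δ-γ)^2 + cos (δ-γ)^2 = 1 := Real.sin_sq_add_cos_sq _
    have h1 : cos (δ-γ)^2 ≤ (1 - 1/100000)^2 := by
      rw [← sq_abs]
      exact pow_le_pow_left₀ (abs_nonneg _) hkey 2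
    have h2 : (1/400:ℝ)^2 ≤ sin (δ-γ)^2 := by nlinarith
    nlinarith [abs_nonneg (sin (δ-γ)), sq_abs (sin (δ-γ)), h2]
end
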